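/- Let L be a finite field extension of the 3-adic field ℚ₃ in which 3 is unramified, i.e., the ramification index of L over ℚ₃ equals 1, with valuation ring O_L. Then for every x ∈ O_L with x ≢ 1 (mod 3O_L), there is at most one y ∈ L satisfying f(x, y) = 0; that is, the equation f(x, y) = 0 has a unique solution y in L whenever it has one. -/
import Mathlib


set_option maxHeartbeats 1000000
set_option synthInstance.maxHeartbeats 1000000

/-- Let `L` be a finite extension of `ℚ₃` with valuation ring `O_L` (the integral closure
of `ℤ₃` in `L`), and suppose `3` is unramified in `L`, i.e. `O_L` is local with maximal
ideal generated by `3`.  Then for `x ∈ O_L` with `x ≢ 1 (mod 3 O_L)`, the equation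
`f(x,y) = x³(y² + y + 1) − y(y² − 2y + 4) = 0` has at most one solution `y ∈ L`. -/
theorem unique_solution_three_adic
    (L : Type*) [Field L] [Algebra ℚ_[3] L] [FiniteDimensional ℚ_[3] L]
    [Algebra ℤ_[3] L] [IsScalarTower ℤ_[3] ℚ_[3] L]
    (hloc : IsLocalRing (integralClosure ℤ_[3] L))
    (hunram : IsLocalRing.maximalIdeal (integralClosure ℤ_[3] L) =
      Ideal.span {(3 : integralClosure ℤ_[3] L)})
    (x : integralClosure ℤ_[3] L)
    (hx : x - 1 ∉ Ideal.span {(3 : integralClosure ℤ_[3] L)})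
    (y z : L)
    (hy : (x : L) ^ 3 * (y ^ 2 + y + 1) - y * (y ^ 2 - 2 * y + 4) = 0)
    (hz : (x : L) ^ 3 * (z ^ 2 + z + 1) - z * (z ^ 2 - 2 * z + 4) = 0) :
    y = z := by
  haveI := hloc
  set I : Ideal (integralClosure ℤ_[3] L) :=
    Ideal.span {(3 : integralClosure ℤ_[3] L)} with hIdef
  haveI hImax : I.IsMaximal := hunram ▸ IsLocalRing.maximalIdeal.isMaximal _
  haveI hIprime : I.IsPrime := hImax.isPrime
  have coe2 : ((2 : integralClosure ℤ_[3] L) : L) = 2 := rfl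
  have coe4 : ((4 : integralClosure ℤ_[3] L) : L) = 4 := rfl
  -- 3 ≠ 0 in O
  have h3L : (3 : L) ≠ 0 := by
    intro h
    have h2 : (algebraMap ℚ_[3] L) 3 = (algebraMap ℚ_[3] L) 0 := by rw [map_ofNat, map_zero, h]
    exact (by norm_num : (3 : ℚ_[3]) ≠ 0) ((algebraMap ℚ_[3] L).injective h2)
  have h3O : (3 : integralClosure ℤ_[3] L) ≠ 0 := by
    intro h
    apply h3L
    have h' : ((3 : integralClosure ℤ_[3] L) : L) = 0 := by rw [h]; rfl
    rw [← h']; rfl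
  -- any solution is integral
  have hmem : ∀ w : L, (x : L) ^ 3 * (w ^ 2 + w + 1) - w * (w ^ 2 - 2 * w + 4) = 0 →
      w ∈ integralClosure ℤ_[3] L := by
    intro w hw
    have hint : IsIntegral (integralClosure ℤ_[3] L) w := by
      refine ⟨Polynomial.X ^ 3 + (Polynomial.C (-(x ^ 3 + 2)) * Polynomial.X ^ 2
        + Polynomial.C (4 - x ^ 3) * Polynomial.X + Polynomial.C (-(x ^ 3))), ?_, ?_⟩
      · apply Polynomial.monic_X_pow_add
        exact lt_of_le_of_lt Polynomial.degree_quadratic_le (by norm_num)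
      · simp only [Polynomial.eval₂_add, Polynomial.eval₂_mul, Polynomial.eval₂_pow,
          Polynomial.eval₂_X, Polynomial.eval₂_C]
        have c1 : (algebraMap (integralClosure ℤ_[3] L) L) (-(x ^ 3 + 2)) = -((x : L) ^ 3 + 2) := by
          simp only [map_neg, map_add, map_pow, map_ofNat]; rfl
        have c2 : (algebraMap (integralClosure ℤ_[3] L) L) (4 - x ^ 3) = 4 - (x : L) ^ 3 := by
          simp only [map_sub, map_pow, map_ofNat]; rfl
        have c3 : (algebraMap (integralClosure ℤ_[3] L) L) (-(x ^ 3)) = -((x : L) ^ 3) := by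
          simp only [map_neg, map_pow]; rfl
        rw [c1, c2, c3]
        linear_combination -hw
    exact isIntegral_trans w hint
  have hyO : y ∈ integralClosure ℤ_[3] L := hmem y hy
  have hzO : z ∈ integralClosure ℤ_[3] L := hmem z hz
  set Y : integralClosure ℤ_[3] L := ⟨y, hyO⟩ with hYdef
  set Z : integralClosure ℤ_[3] L := ⟨z, hzO⟩ with hZdef
  have eqY : x ^ 3 * (Y ^ 2 + Y + 1) - Y * (Y ^ 2 - 2 * Y + 4) = 0 := by
    apply Subtype.coe_injective
    push_cast [coe2, coe4]
    exact hy
  have eqZ : x ^ 3 * (Z ^ 2 + Z + 1) - Z * (Z ^ 2 - 2 * Z + 4) = 0 := by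
    apply Subtype.coe_injective
    push_cast [coe2, coe4]
    exact hz
  -- x^3 - 1 is not in I
  have hx3 : x ^ 3 - 1 ∉ I := by
    intro h
    obtain ⟨s, hs⟩ := Ideal.mem_span_singleton'.mp h
    apply hx
    refine hIprime.mem_of_pow_mem 3 ?_
    exact Ideal.mem_span_singleton'.mpr ⟨s - x ^ 2 + x, by linear_combination hs⟩
  -- any solution has W - 1 ∉ I
  have hnot : ∀ W : integralClosure ℤ_[3] L,
      x ^ 3 * (W ^ 2 + W + 1) - W * (W ^ 2 - 2 * W + 4) = 0 → W - 1 ∉ I := by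
    intro W eqW hWI
    obtain ⟨t, ht⟩ := Ideal.mem_span_singleton'.mp hWI
    have hW : W = 1 + 3 * t := by linear_combination -ht
    rw [hW] at eqW
    have claim1 : (3 : integralClosure ℤ_[3] L) *
        ((x ^ 3 - 1) * (1 + 3 * t + 3 * t ^ 2) - 9 * t ^ 3) = 0 := by
      linear_combination eqW
    have inner : (x ^ 3 - 1) * (1 + 3 * t + 3 * t ^ 2) - 9 * t ^ 3 = 0 :=
      (mul_eq_zero.mp claim1).resolve_left h3O
    apply hx3
    exact Ideal.mem_span_singleton'.mpr ⟨3 * t ^ 3 - (x ^ 3 - 1) * (t + t ^ 2),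
      by linear_combination -inner⟩
  -- pass to the quotient field
  set q : integralClosure ℤ_[3] L →+* (integralClosure ℤ_[3] L) ⧸ I :=
    Ideal.Quotient.mk I with hqdef
  have h3 : (3 : (integralClosure ℤ_[3] L) ⧸ I) = 0 := by
    rw [show (3 : (integralClosure ℤ_[3] L) ⧸ I) = q 3 from (map_ofNat q 3).symm]
    exact Ideal.Quotient.eq_zero_iff_mem.mpr (Ideal.mem_span_singleton_self _)
  have hne0 : ∀ w : integralClosure ℤ_[3] L, w ∉ I → q w ≠ 0 := fun w hw h =>
    hw (Ideal.Quotient.eq_zero_iff_mem.mp h)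
  have ha : q x - 1 ≠ 0 := by
    intro h
    apply hne0 (x - 1) hx
    rw [map_sub, map_one]; exact h
  have hsol : ∀ W : integralClosure ℤ_[3] L,
      x ^ 3 * (W ^ 2 + W + 1) - W * (W ^ 2 - 2 * W + 4) = 0 →
      q W = 1 + (q x - 1) ^ 3 := by
    intro W eqW
    have hb : q W - 1 ≠ 0 := by
      intro h
      apply hne0 (W - 1) (hnot W eqW)
      rw [map_sub, map_one]; exact h
    have h1 : (q x) ^ 3 * ((q W) ^ 2 + q W + 1) - q W * ((q W) ^ 2 - 2 * (q W) + 4) = 0 := by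
      have h0 := congrArg q eqW
      simp only [map_sub, map_mul, map_pow, map_add, map_one, map_ofNat, map_zero] at h0
      exact h0
    have G1 : (q W - 1) ^ 2 * ((q W - 1) - (q x - 1) ^ 3) = 0 := by
      linear_combination -h1 + (((q x) ^ 2 - q x) * (q W - 1) ^ 2 + q W * (q x - 1) ^ 3
        + 3 * q W * ((q x) ^ 2 - q x)) * h3
    rcases mul_eq_zero.mp G1 with h | h
    · exact absurd (pow_eq_zero_iff (two_ne_zero) |>.mp h) hb
    · linear_combination h
  have hbY := hsol Y eqY
  have hbZ := hsol Z eqZ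
  -- conclude
  by_contra hne
  have hGL : (x : L) ^ 3 * (y + z + 1) - (y ^ 2 + y * z + z ^ 2 - 2 * (y + z) + 4) = 0 := by
    have hfac : (y - z) * ((x : L) ^ 3 * (y + z + 1)
        - (y ^ 2 + y * z + z ^ 2 - 2 * (y + z) + 4)) = 0 := by
      linear_combination hy - hz
    exact (mul_eq_zero.mp hfac).resolve_left (sub_ne_zero.mpr hne)
  have eqE : x ^ 3 * (Y + Z + 1) - (Y ^ 2 + Y * Z + Z ^ 2 - 2 * (Y + Z) + 4) = 0 := by
    apply Subtype.coe_injective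
    push_cast [coe2, coe4]
    exact hGL
  have hE : (q x) ^ 3 * (q Y + q Z + 1)
      - ((q Y) ^ 2 + q Y * q Z + (q Z) ^ 2 - 2 * (q Y + q Z) + 4) = 0 := by
    have h0 := congrArg q eqE
    simp only [map_sub, map_mul, map_pow, map_add, map_one, map_ofNat, map_zero] at h0
    exact h0
  rw [hbY, hbZ] at hE
  have hc6 : (q x - 1) ^ 6 = 0 := by
    linear_combination -hE + (3 * (q x - 1) + 3 * (q x - 1) ^ 2 + (q x - 1) ^ 3
      + 2 * (q x - 1) ^ 4 + 2 * (q x - 1) ^ 5) * h3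
  exact ha (pow_eq_zero_iff (by norm_num) |>.mp hc6)
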